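/- If ẽ = 0 and e ≠ 0, the Verma module of the Takiff superalgebra of gl(1|1) with highest weight (n,e,ñ,0) has, up to scalar multiples, a unique nonzero singular vector other than v, namely ψ̃⁻v; the submodule it generates is 2-dimensional (spanned by ψ̃⁻v and ψ̃⁻ψ⁻v) and is the maximal proper submodule, so the irreducible quotient is 2-dimensional. -/

import Mathlib

/-! Because `ψ⁻² = ψ̃⁻² = 0` and `ψ⁻, ψ̃⁻` anticommute, the Verma module is spanned by
`v, ψ⁻v, ψ̃⁻v, ψ̃⁻ψ⁻v`, so it is 4-dimensional. When `ẽ = 0` we get `ψ⁺ψ̃⁻v = ẽv = 0`, so `ψ̃⁻v` is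
singular, and `ψ̃⁻v, ψ̃⁻ψ⁻v` span an invariant plane. For `w = a v + b ψ⁻v + c ψ̃⁻v + d ψ̃⁻ψ⁻v`,
`ψ⁺w = e(b v - d ψ̃⁻v)` and `ψ⁺ψ⁻w = e(a v + c ψ̃⁻v)`. A proper invariant submodule contains no
`a v + c ψ̃⁻v` with `a ≠ 0`, because applying `ψ̃⁻` would put `ψ̃⁻v`, and then `v`, in it. Since
`e ≠ 0`, every element of such a submodule therefore has `a = b = 0`. For a singular `w`, `ψ⁺w = 0`
forces `b = d = 0`, and `v`, `ψ̃⁻v` have the distinct `N`-weights `n`, `n - 1`. -/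

/-- A representation of the Takiff superalgebra `g̃l(1|1)` of `gl(1|1)` on a complex
vector space `V`: linear endomorphisms for the even generators `N, E, Ñ, Ẽ` and the odd
generators `ψ⁺, ψ⁻, ψ̃⁺, ψ̃⁻`, subject to all the (super)commutation relations:
`[N,ψ±] = ±ψ±`, `{ψ⁺,ψ⁻} = E`, `[N,ψ̃±] = [Ñ,ψ±] = ±ψ̃±`, `{ψ⁺,ψ̃⁻} = {ψ̃⁺,ψ⁻} = Ẽ`,
with all remaining (super)brackets equal to zero. -/
structure TakiffGl11Rep (V : Type*) [AddCommGroup V] [Module ℂ V] where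
  N : V →ₗ[ℂ] V
  E : V →ₗ[ℂ] V
  Nt : V →ₗ[ℂ] V
  Et : V →ₗ[ℂ] V
  pp : V →ₗ[ℂ] V
  pm : V →ₗ[ℂ] V
  tp : V →ₗ[ℂ] V
  tm : V →ₗ[ℂ] V
  rel_N_E : N ∘ₗ E = E ∘ₗ N
  rel_N_Nt : N ∘ₗ Nt = Nt ∘ₗ N
  rel_N_Et : N ∘ₗ Et = Et ∘ₗ N
  rel_E_Nt : E ∘ₗ Nt = Nt ∘ₗ E
  rel_E_Et : E ∘ₗ Et = Et ∘ₗ E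
  rel_Nt_Et : Nt ∘ₗ Et = Et ∘ₗ Nt
  rel_N_pp : N ∘ₗ pp - pp ∘ₗ N = pp
  rel_N_pm : N ∘ₗ pm - pm ∘ₗ N = -pm
  rel_N_tp : N ∘ₗ tp - tp ∘ₗ N = tp
  rel_N_tm : N ∘ₗ tm - tm ∘ₗ N = -tm
  rel_E_pp : E ∘ₗ pp = pp ∘ₗ E
  rel_E_pm : E ∘ₗ pm = pm ∘ₗ E
  rel_E_tp : E ∘ₗ tp = tp ∘ₗ E
  rel_E_tm : E ∘ₗ tm = tm ∘ₗ E
  rel_Nt_pp : Nt ∘ₗ pp - pp ∘ₗ Nt = tp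
  rel_Nt_pm : Nt ∘ₗ pm - pm ∘ₗ Nt = -tm
  rel_Nt_tp : Nt ∘ₗ tp = tp ∘ₗ Nt
  rel_Nt_tm : Nt ∘ₗ tm = tm ∘ₗ Nt
  rel_Et_pp : Et ∘ₗ pp = pp ∘ₗ Et
  rel_Et_pm : Et ∘ₗ pm = pm ∘ₗ Et
  rel_Et_tp : Et ∘ₗ tp = tp ∘ₗ Et
  rel_Et_tm : Et ∘ₗ tm = tm ∘ₗ Et
  rel_pp_pp : pp ∘ₗ pp = 0
  rel_pm_pm : pm ∘ₗ pm = 0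
  rel_tp_tp : tp ∘ₗ tp = 0
  rel_tm_tm : tm ∘ₗ tm = 0
  rel_pp_pm : pp ∘ₗ pm + pm ∘ₗ pp = E
  rel_pp_tp : pp ∘ₗ tp + tp ∘ₗ pp = 0
  rel_pp_tm : pp ∘ₗ tm + tm ∘ₗ pp = Et
  rel_pm_tp : pm ∘ₗ tp + tp ∘ₗ pm = Et
  rel_pm_tm : pm ∘ₗ tm + tm ∘ₗ pm = 0
  rel_tp_tm : tp ∘ₗ tm + tm ∘ₗ tp = 0

namespace TakiffGl11Rep

variable {V : Type*} [AddCommGroup V] [Module ℂ V] (ρ : TakiffGl11Rep V)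

/-- A submodule invariant under the action of `g̃l(1|1)`. -/
def Invariant (W : Submodule ℂ V) : Prop :=
  ∀ w ∈ W, ρ.N w ∈ W ∧ ρ.E w ∈ W ∧ ρ.Nt w ∈ W ∧ ρ.Et w ∈ W ∧
    ρ.pp w ∈ W ∧ ρ.pm w ∈ W ∧ ρ.tp w ∈ W ∧ ρ.tm w ∈ W

/-- `v` is a highest weight vector of weight `(n, e, ñ, ẽ)`: a nonzero simultaneous
eigenvector of the Cartan generators annihilated by the raising operators `ψ⁺, ψ̃⁺`. -/
def IsHW (v : V) (n e nt et : ℂ) : Prop :=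
  v ≠ 0 ∧ ρ.N v = n • v ∧ ρ.E v = e • v ∧ ρ.Nt v = nt • v ∧ ρ.Et v = et • v ∧
    ρ.pp v = 0 ∧ ρ.tp v = 0

/-- `(V, v)` is the Verma module of highest weight `(n, e, ñ, ẽ)`: `v` is a highest
weight vector of that weight, the lowering operators `ψ⁻, ψ̃⁻` act freely on `v`
(`v, ψ⁻v, ψ̃⁻v, ψ̃⁻ψ⁻v` are linearly independent), and `v` generates `V`. -/
def IsVerma (v : V) (n e nt et : ℂ) : Prop :=
  ρ.IsHW v n e nt et ∧
  LinearIndependent ℂ ![v, ρ.pm v, ρ.tm v, ρ.tm (ρ.pm v)] ∧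
  ∀ W : Submodule ℂ V, ρ.Invariant W → v ∈ W → W = ⊤

/-- The quadratic Casimir `Q₁ = NẼ + ÑE + ψ⁻ψ̃⁺ + ψ̃⁻ψ⁺`. -/
def Q₁ : V →ₗ[ℂ] V := ρ.N ∘ₗ ρ.Et + ρ.Nt ∘ₗ ρ.E + ρ.pm ∘ₗ ρ.tp + ρ.tm ∘ₗ ρ.pp

/-- The quadratic Casimir `Q₂ = ÑẼ + ψ̃⁻ψ̃⁺`. -/
def Q₂ : V →ₗ[ℂ] V := ρ.Nt ∘ₗ ρ.Et + ρ.tm ∘ₗ ρ.tp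

end TakiffGl11Rep

lemma Matrix.range_cons_cons_cons_cons_empty {α : Type*} (a b c d : α) (u : Fin 0 → α) :
    Set.range (vecCons a (vecCons b (vecCons c (vecCons d u)))) = {a, b, c, d} := by
  rw [range_cons, range_cons, range_cons, range_cons_empty]
  rfl

namespace TakiffGl11Rep

variable {V : Type*} [AddCommGroup V] [Module ℂ V] (ρ : TakiffGl11Rep V)

section Relations

/-! Each relation is oriented to move lowering operators to the left and `tm` before `pm`, so
that `simp` brings a word applied to a highest weight vector into the normal form
`v, ψ⁻v, ψ̃⁻v, ψ̃⁻ψ⁻v`. -/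

variable (x : V)

@[simp] lemma N_pm_apply : ρ.N (ρ.pm x) = ρ.pm (ρ.N x) - ρ.pm x := by
  simpa [sub_eq_iff_eq_add, neg_add_eq_sub] using LinearMap.congr_fun ρ.rel_N_pm x

@[simp] lemma N_tm_apply : ρ.N (ρ.tm x) = ρ.tm (ρ.N x) - ρ.tm x := by
  simpa [sub_eq_iff_eq_add, neg_add_eq_sub] using LinearMap.congr_fun ρ.rel_N_tm x

@[simp] lemma E_pm_apply : ρ.E (ρ.pm x) = ρ.pm (ρ.E x) := LinearMap.congr_fun ρ.rel_E_pm x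

@[simp] lemma E_tm_apply : ρ.E (ρ.tm x) = ρ.tm (ρ.E x) := LinearMap.congr_fun ρ.rel_E_tm x

@[simp] lemma Nt_pm_apply : ρ.Nt (ρ.pm x) = ρ.pm (ρ.Nt x) - ρ.tm x := by
  simpa [sub_eq_iff_eq_add, neg_add_eq_sub] using LinearMap.congr_fun ρ.rel_Nt_pm x

@[simp] lemma Nt_tm_apply : ρ.Nt (ρ.tm x) = ρ.tm (ρ.Nt x) := LinearMap.congr_fun ρ.rel_Nt_tm x

@[simp] lemma Et_pm_apply : ρ.Et (ρ.pm x) = ρ.pm (ρ.Et x) := LinearMap.congr_fun ρ.rel_Et_pm x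

@[simp] lemma Et_tm_apply : ρ.Et (ρ.tm x) = ρ.tm (ρ.Et x) := LinearMap.congr_fun ρ.rel_Et_tm x

@[simp] lemma pp_pm_apply : ρ.pp (ρ.pm x) = ρ.E x - ρ.pm (ρ.pp x) := by
  simpa [eq_sub_iff_add_eq] using LinearMap.congr_fun ρ.rel_pp_pm x

@[simp] lemma pp_tm_apply : ρ.pp (ρ.tm x) = ρ.Et x - ρ.tm (ρ.pp x) := by
  simpa [eq_sub_iff_add_eq] using LinearMap.congr_fun ρ.rel_pp_tm x

@[simp] lemma tp_pm_apply : ρ.tp (ρ.pm x) = ρ.Et x - ρ.pm (ρ.tp x) := by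
  simpa [eq_sub_iff_add_eq, add_comm] using LinearMap.congr_fun ρ.rel_pm_tp x

@[simp] lemma tp_tm_apply : ρ.tp (ρ.tm x) = -ρ.tm (ρ.tp x) := by
  simpa [eq_neg_iff_add_eq_zero] using LinearMap.congr_fun ρ.rel_tp_tm x

@[simp] lemma pm_pm_apply : ρ.pm (ρ.pm x) = 0 := by
  simpa using LinearMap.congr_fun ρ.rel_pm_pm x

@[simp] lemma pm_tm_apply : ρ.pm (ρ.tm x) = -ρ.tm (ρ.pm x) := by
  simpa [eq_neg_iff_add_eq_zero] using LinearMap.congr_fun ρ.rel_pm_tm x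

@[simp] lemma tm_tm_apply : ρ.tm (ρ.tm x) = 0 := by
  simpa using LinearMap.congr_fun ρ.rel_tm_tm x

end Relations

lemma invariant_span {s : Set V}
    (hs : ∀ x ∈ s, ρ.N x ∈ Submodule.span ℂ s ∧ ρ.E x ∈ Submodule.span ℂ s ∧
      ρ.Nt x ∈ Submodule.span ℂ s ∧ ρ.Et x ∈ Submodule.span ℂ s ∧
      ρ.pp x ∈ Submodule.span ℂ s ∧ ρ.pm x ∈ Submodule.span ℂ s ∧
      ρ.tp x ∈ Submodule.span ℂ s ∧ ρ.tm x ∈ Submodule.span ℂ s) :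
    ρ.Invariant (Submodule.span ℂ s) := by
  intro w hw
  have stable (T : V →ₗ[ℂ] V) (hT : ∀ x ∈ s, T x ∈ Submodule.span ℂ s) :
      T w ∈ Submodule.span ℂ s :=
    (Submodule.span_le (p := (Submodule.span ℂ s).comap T)).mpr hT hw
  exact ⟨stable _ fun x hx => (hs x hx).1, stable _ fun x hx => (hs x hx).2.1,
    stable _ fun x hx => (hs x hx).2.2.1, stable _ fun x hx => (hs x hx).2.2.2.1,
    stable _ fun x hx => (hs x hx).2.2.2.2.1, stable _ fun x hx => (hs x hx).2.2.2.2.2.1,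
    stable _ fun x hx => (hs x hx).2.2.2.2.2.2.1, stable _ fun x hx => (hs x hx).2.2.2.2.2.2.2⟩

variable {ρ} {v : V} {n e nt et : ℂ}

lemma IsHW.invariant_span_lowering (hv : ρ.IsHW v n e nt et) :
    ρ.Invariant (Submodule.span ℂ {v, ρ.pm v, ρ.tm v, ρ.tm (ρ.pm v)}) := by
  obtain ⟨-, hN, hE, hNt, hEt, hpp, htp⟩ := hv
  refine ρ.invariant_span fun x hx => ?_
  simp only [Set.mem_insert_iff, Set.mem_singleton_iff] at hx
  rcases hx with rfl | rfl | rfl | rfl <;>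
    simp (maxDischargeDepth := 3) [hN, hE, hNt, hEt, hpp, htp, sub_sub, Submodule.sub_mem,
      Submodule.add_mem, Submodule.smul_mem, Submodule.mem_span_of_mem]

lemma IsHW.invariant_span_tm (hv : ρ.IsHW v n e nt 0) :
    ρ.Invariant (Submodule.span ℂ {ρ.tm v, ρ.tm (ρ.pm v)}) := by
  obtain ⟨-, hN, hE, hNt, hEt, hpp, htp⟩ := hv
  refine ρ.invariant_span fun x hx => ?_
  simp only [Set.mem_insert_iff, Set.mem_singleton_iff] at hx
  rcases hx with rfl | rfl <;>
    simp (maxDischargeDepth := 3) [hN, hE, hNt, hEt, hpp, htp, sub_sub, Submodule.sub_mem,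
      Submodule.add_mem, Submodule.smul_mem, Submodule.mem_span_of_mem]

lemma IsHW.pp_apply_combination (hv : ρ.IsHW v n e nt 0) (a b c d : ℂ) :
    ρ.pp (a • v + b • ρ.pm v + c • ρ.tm v + d • ρ.tm (ρ.pm v)) =
      (e * b) • v + (-(e * d)) • ρ.tm v := by
  obtain ⟨-, -, hE, -, hEt, hpp, -⟩ := hv
  simp only [map_add, map_smul, map_sub, map_zero, pp_pm_apply, pp_tm_apply, Et_pm_apply, hE,
    hEt, hpp, zero_smul]
  module

lemma IsHW.pp_pm_apply_combination (hv : ρ.IsHW v n e nt 0) (a b c d : ℂ) :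
    ρ.pp (ρ.pm (a • v + b • ρ.pm v + c • ρ.tm v + d • ρ.tm (ρ.pm v))) =
      (e * a) • v + (e * c) • ρ.tm v := by
  obtain ⟨-, -, hE, -, hEt, hpp, -⟩ := hv
  simp only [map_add, map_smul, map_neg, map_sub, map_zero, pp_pm_apply, pp_tm_apply,
    pm_pm_apply, pm_tm_apply, Et_pm_apply, hE, hEt, hpp, zero_smul]
  module

lemma IsHW.N_apply_smul_add_smul_tm (hv : ρ.IsHW v n e nt et) (a c : ℂ) :
    ρ.N (a • v + c • ρ.tm v) = (n * a) • v + ((n - 1) * c) • ρ.tm v := by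
  obtain ⟨-, hN, -⟩ := hv
  simp only [map_add, map_smul, N_tm_apply, hN]
  module

lemma IsVerma.span_lowering_eq_top (h : ρ.IsVerma v n e nt et) :
    Submodule.span ℂ {v, ρ.pm v, ρ.tm v, ρ.tm (ρ.pm v)} = ⊤ :=
  h.2.2 _ h.1.invariant_span_lowering (Submodule.subset_span (by simp))

lemma IsVerma.exists_eq_combination (h : ρ.IsVerma v n e nt et) (w : V) :
    ∃ a b c d : ℂ, w = a • v + b • ρ.pm v + c • ρ.tm v + d • ρ.tm (ρ.pm v) := by
  have hw : w ∈ Submodule.span ℂ (Set.range ![v, ρ.pm v, ρ.tm v, ρ.tm (ρ.pm v)]) := by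
    rw [Matrix.range_cons_cons_cons_cons_empty, h.span_lowering_eq_top]
    exact Submodule.mem_top
  obtain ⟨f, rfl⟩ := (Submodule.mem_span_range_iff_exists_fun ℂ).mp hw
  exact ⟨f 0, f 1, f 2, f 3, by simp [Fin.sum_univ_four]⟩

lemma IsVerma.finrank_eq_four (h : ρ.IsVerma v n e nt et) : Module.finrank ℂ V = 4 := by
  rw [← finrank_top, ← h.span_lowering_eq_top, ← Matrix.range_cons_cons_cons_cons_empty,
    finrank_span_eq_card h.2.1, Fintype.card_fin]

lemma IsVerma.linearIndependent_v_tm (h : ρ.IsVerma v n e nt et) :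
    LinearIndependent ℂ ![v, ρ.tm v] := by
  convert h.2.1.comp ![0, 2] (by decide) using 1
  ext i; fin_cases i <;> rfl

lemma IsVerma.linearIndependent_tm (h : ρ.IsVerma v n e nt et) :
    LinearIndependent ℂ ![ρ.tm v, ρ.tm (ρ.pm v)] := by
  convert h.2.1.comp ![2, 3] (by decide) using 1
  ext i; fin_cases i <;> rfl

lemma IsVerma.finrank_span_tm (h : ρ.IsVerma v n e nt et) :
    Module.finrank ℂ (Submodule.span ℂ {ρ.tm v, ρ.tm (ρ.pm v)}) = 2 := by
  rw [← Matrix.range_cons_cons_empty, finrank_span_eq_card h.linearIndependent_tm,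
    Fintype.card_fin]

lemma IsVerma.span_tm_ne_top (h : ρ.IsVerma v n e nt et) :
    Submodule.span ℂ {ρ.tm v, ρ.tm (ρ.pm v)} ≠ ⊤ := fun htop => by
  have := h.finrank_span_tm
  rw [htop, finrank_top, h.finrank_eq_four] at this
  exact absurd this (by norm_num)

lemma IsVerma.finrank_quotient_span_tm (h : ρ.IsVerma v n e nt et) :
    Module.finrank ℂ (V ⧸ Submodule.span ℂ {ρ.tm v, ρ.tm (ρ.pm v)}) = 2 := by
  have : Module.Finite ℂ V := Module.finite_of_finrank_pos (by rw [h.finrank_eq_four]; norm_num)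
  have hsum := Submodule.finrank_quotient_add_finrank (Submodule.span ℂ {ρ.tm v, ρ.tm (ρ.pm v)})
  rw [h.finrank_span_tm, h.finrank_eq_four] at hsum
  omega

lemma IsVerma.eq_zero_of_smul_add_smul_tm_mem (h : ρ.IsVerma v n e nt et) {W : Submodule ℂ V}
    (hW : ρ.Invariant W) (hne : W ≠ ⊤) {a c : ℂ} (hx : a • v + c • ρ.tm v ∈ W) : a = 0 := by
  by_contra ha
  have htm : ρ.tm v ∈ W := by
    have := (hW _ hx).2.2.2.2.2.2.2
    simp only [map_add, map_smul, tm_tm_apply, smul_zero, add_zero] at this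
    exact (W.smul_mem_iff ha).mp this
  have hv : v ∈ W := (W.smul_mem_iff ha).mp ((W.add_mem_iff_left (W.smul_mem c htm)).mp hx)
  exact hne (h.2.2 W hW hv)

lemma IsVerma.le_span_tm (h : ρ.IsVerma v n e nt 0) (he : e ≠ 0) {W : Submodule ℂ V}
    (hW : ρ.Invariant W) (hne : W ≠ ⊤) : W ≤ Submodule.span ℂ {ρ.tm v, ρ.tm (ρ.pm v)} := by
  intro w hw
  obtain ⟨a, b, c, d, rfl⟩ := h.exists_eq_combination w
  have hb : e * b = 0 := h.eq_zero_of_smul_add_smul_tm_mem hW hne <| by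
    rw [← h.1.pp_apply_combination]; exact (hW _ hw).2.2.2.2.1
  have ha : e * a = 0 := h.eq_zero_of_smul_add_smul_tm_mem hW hne <| by
    rw [← h.1.pp_pm_apply_combination]; exact (hW _ (hW _ hw).2.2.2.2.2.1).2.2.2.2.1
  rw [(mul_eq_zero.mp ha).resolve_left he, (mul_eq_zero.mp hb).resolve_left he]
  simpa using Submodule.mem_span_pair.mpr ⟨c, d, rfl⟩

lemma IsVerma.mem_span_or_mem_span_tm_of_singular (h : ρ.IsVerma v n e nt 0) (he : e ≠ 0)
    {w : V} {μ : ℂ} (hN : ρ.N w = μ • w) (hpp : ρ.pp w = 0) :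
    w ∈ Submodule.span ℂ {v} ∨ w ∈ Submodule.span ℂ {ρ.tm v} := by
  obtain ⟨a, b, c, d, rfl⟩ := h.exists_eq_combination w
  rw [h.1.pp_apply_combination] at hpp
  obtain ⟨hb, hd⟩ := LinearIndependent.pair_iff.mp h.linearIndependent_v_tm _ _ hpp
  rw [(mul_eq_zero.mp hb).resolve_left he, (mul_eq_zero.mp (neg_eq_zero.mp hd)).resolve_left he,
    zero_smul, zero_smul, add_zero, add_zero] at hN ⊢
  rw [h.1.N_apply_smul_add_smul_tm] at hN
  obtain ⟨ha, hc⟩ := LinearIndependent.pair_iff.mp h.linearIndependent_v_tm (n * a - μ * a)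
    ((n - 1) * c - μ * c) (by rw [sub_smul, sub_smul, sub_add_sub_comm, hN]; module)
  by_cases ha0 : a = 0
  · exact .inr (Submodule.mem_span_singleton.mpr ⟨c, by simp [ha0]⟩)
  · have hμ : n - μ = 0 :=
      (mul_eq_zero.mp (by linear_combination ha : (n - μ) * a = 0)).resolve_right ha0
    have hc0 : c = 0 := by linear_combination -hc + c * hμ
    exact .inl (Submodule.mem_span_singleton.mpr ⟨a, by simp [hc0]⟩)

end TakiffGl11Rep

/-- If `ẽ = 0` and `e ≠ 0`, the Verma module of the Takiff superalgebra of `gl(1|1)`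
with highest weight `(n, e, ñ, 0)` has, up to scalar multiples, a unique nonzero singular
vector other than `v`, namely `ψ̃⁻v`; the submodule it generates is the 2-dimensional
span of `ψ̃⁻v` and `ψ̃⁻ψ⁻v`, it is the maximal proper invariant submodule, and the
irreducible quotient is 2-dimensional. -/
theorem takiff_gl11_verma_semitypical_structure {V : Type*} [AddCommGroup V] [Module ℂ V]
    (ρ : TakiffGl11Rep V) (v : V) (n e nt : ℂ) (h : ρ.IsVerma v n e nt 0) (he : e ≠ 0) :
    -- `ψ̃⁻v` is a singular vector
    (ρ.pp (ρ.tm v) = 0 ∧ ρ.tp (ρ.tm v) = 0 ∧ ρ.tm v ≠ 0) ∧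
    -- uniqueness: every singular (weight) vector is a multiple of `v` or of `ψ̃⁻v`
    (∀ w : V, (∃ a b c d : ℂ, ρ.N w = a • w ∧ ρ.E w = b • w ∧ ρ.Nt w = c • w ∧
        ρ.Et w = d • w) → ρ.pp w = 0 → ρ.tp w = 0 →
      w ∈ Submodule.span ℂ {v} ∨ w ∈ Submodule.span ℂ {ρ.tm v}) ∧
    -- the submodule generated by `ψ̃⁻v` is `span{ψ̃⁻v, ψ̃⁻ψ⁻v}`, 2-dimensional,
    -- invariant, proper, and maximal: it contains every proper invariant submodule
    ρ.Invariant (Submodule.span ℂ {ρ.tm v, ρ.tm (ρ.pm v)}) ∧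
    Module.finrank ℂ (Submodule.span ℂ {ρ.tm v, ρ.tm (ρ.pm v)}) = 2 ∧
    Submodule.span ℂ {ρ.tm v, ρ.tm (ρ.pm v)} ≠ ⊤ ∧
    (∀ W : Submodule ℂ V, ρ.Invariant W → W ≠ ⊤ →
      W ≤ Submodule.span ℂ {ρ.tm v, ρ.tm (ρ.pm v)}) ∧
    -- the irreducible quotient is 2-dimensional
    Module.finrank ℂ (V ⧸ Submodule.span ℂ {ρ.tm v, ρ.tm (ρ.pm v)}) = 2 := by
  obtain ⟨-, -, -, -, hEt, hpp, htp⟩ := h.1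
  exact ⟨⟨by simp [hEt, hpp], by simp [htp], h.2.1.ne_zero 2⟩,
    fun w ⟨μ, _, _, _, hN, _⟩ hppw _ => h.mem_span_or_mem_span_tm_of_singular he hN hppw,
    h.1.invariant_span_tm, h.finrank_span_tm, h.span_tm_ne_top,
    fun W hW hne => h.le_span_tm he hW hne, h.finrank_quotient_span_tm⟩
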